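/- arXiv:1209.6589 — 2 statements merged into one kernel-verified Lean document; each statement's English description precedes it below -/
import Mathlib

section
/- Under the hypotheses that x_{m+1} = A_m x_m admits a general dichotomy with bounds (a_{m,n}) and (b_{m,n}), that the f_m are Lipschitz with f_m(0)=0, that α < +∞ and 2α + max{2β, √β} < 1, for any φ, ψ ∈ 𝒳 and any n ∈ ℕ the associated sequences x^φ, x^ψ ∈ ℬ_n satisfy ‖x^φ − x^ψ‖_n ≤ (α/(1 − 2α)²) d(φ, ψ), where d(φ,ψ) = sup{‖φ_k(ξ) − ψ_k(ξ)‖/‖ξ‖ : k ∈ ℕ, ξ ∈ E_k \ {0}}. -/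
/-!
Both estimates come from one discrete Gronwall argument. If
`u_m ≤ c a_{m,n} + ∑_{n ≤ k < m} a_{m,k+1} Lip(f_k) (κ u_k + e a_{k,n})`, then `u_k ≤ K a_{k,n}`
for all `k < m` gives `u_m ≤ (c + α (κ K + e)) a_{m,n}` by the definition of `α`, so the induction
closes with `K = (c + α e) / (1 - κ α)`. By (D1) and the Lyapunov–Perron equation, this applies to
`u_m = ‖x^ψ_m ξ‖` with `c = ‖ξ‖`, `κ = 2`, `e = 0` (as `‖η + ψ η‖ ≤ 2 ‖η‖`), and then to
`u_m = ‖x^φ_m ξ - x^ψ_m ξ‖` with `c = 0`, `κ = 2`, `e = d(φ, ψ) ‖ξ‖ / (1 - 2α)`, because over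
`x^ψ_k ξ` the graphs of `φ` and `ψ` are `d(φ, ψ) ‖x^ψ_k ξ‖` apart.
-/

/-- `calA A m n` is the linear evolution operator
`𝒜_{m,n} = A_{m-1} ∘ ⋯ ∘ A_n` (and the identity if `m ≤ n`). -/
def calA {X : Type*} [NormedAddCommGroup X] [NormedSpace ℝ X]
    (A : ℕ → X →L[ℝ] X) : ℕ → ℕ → X →L[ℝ] X
  | 0, _ => ContinuousLinearMap.id ℝ X
  | m + 1, n => if m + 1 ≤ n then ContinuousLinearMap.id ℝ X else (A m).comp (calA A m n)

open Finset

theorem le_mul_of_le_add_sum_mul {a : ℕ → ℕ → ℝ} {L u : ℕ → ℝ} {α κ c e : ℝ} {n : ℕ}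
    (ha : ∀ m k, k ≤ m → 0 ≤ a m k) (hL : ∀ k, 0 ≤ L k) (hκ : 0 ≤ κ) (hκα : κ * α < 1)
    (hce : 0 ≤ κ * c + e)
    (hα : ∀ m, n ≤ m → ∑ k ∈ Ico n m, a m (k + 1) * (a k n * L k) ≤ α * a m n)
    (hu : ∀ m, n ≤ m →
      u m ≤ c * a m n + ∑ k ∈ Ico n m, a m (k + 1) * (L k * (κ * u k + e * a k n))) :
    ∀ m, n ≤ m → u m ≤ (c + α * e) / (1 - κ * α) * a m n := by
  set K := (c + α * e) / (1 - κ * α)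
  have hK1 : K * (1 - κ * α) = c + α * e := div_mul_cancel₀ _ (by linarith)
  have hK : c + α * (κ * K + e) = K := by linear_combination -hK1
  have hK2 : (κ * K + e) * (1 - κ * α) = κ * c + e := by linear_combination κ * hK1
  have hK0 : 0 ≤ κ * K + e := nonneg_of_mul_nonneg_left (hK2 ▸ hce) (by linarith)
  intro m
  induction m using Nat.strong_induction_on with
  | _ m ih =>
    intro hnm
    calc u m ≤ c * a m n + ∑ k ∈ Ico n m, a m (k + 1) * (L k * (κ * u k + e * a k n)) :=
          hu m hnm
      _ ≤ c * a m n + ∑ k ∈ Ico n m, a m (k + 1) * (a k n * L k) * (κ * K + e) := by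
          refine add_le_add le_rfl (sum_le_sum fun k hk => ?_)
          obtain ⟨hnk, hkm⟩ := mem_Ico.1 hk
          calc a m (k + 1) * (L k * (κ * u k + e * a k n))
              ≤ a m (k + 1) * (L k * (κ * (K * a k n) + e * a k n)) := by
                gcongr
                · exact ha m (k + 1) hkm
                · exact hL k
                · exact ih k hkm hnk
            _ = a m (k + 1) * (a k n * L k) * (κ * K + e) := by ring
      _ ≤ c * a m n + α * a m n * (κ * K + e) := by
          rw [← sum_mul]
          gcongr
          exact hα m hnm
      _ = (c + α * (κ * K + e)) * a m n := by ring
      _ = K * a m n := by rw [hK]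

theorem sum_le_mul_of_mem_upperBounds {a : ℕ → ℕ → ℝ} {L : ℕ → ℝ} {α : ℝ}
    (ha : ∀ m n, n ≤ m → 0 < a m n) (hL : ∀ k, 0 ≤ L k)
    (hα : α ∈ upperBounds {r : ℝ | ∃ m n : ℕ, n < m ∧
      r = (∑ k ∈ Ico n m, a m (k + 1) * (a k n * L k)) / a m n})
    (n m : ℕ) (hnm : n ≤ m) :
    ∑ k ∈ Ico n m, a m (k + 1) * (a k n * L k) ≤ α * a m n := by
  rcases hnm.lt_or_eq with h | rfl
  · rw [← div_le_iff₀ (ha m n hnm)]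
    exact hα ⟨m, n, h, rfl⟩
  · have hα0 : 0 ≤ α := by
      refine le_trans ?_ (hα ⟨n + 1, n, n.lt_succ_self, rfl⟩)
      refine div_nonneg (sum_nonneg fun k hk => ?_) (ha _ _ n.le_succ).le
      obtain ⟨hnk, hkn⟩ := mem_Ico.1 hk
      have := ha (n + 1) (k + 1) hkn
      have := ha k n hnk
      have := hL k
      positivity
    simpa using mul_nonneg hα0 (ha n n le_rfl).le

section GraphDistance

variable {ι 𝕜 X : Type*} [NormedAddCommGroup X] [Semiring 𝕜] [Module 𝕜 X]
  {V W : ι → Submodule 𝕜 X}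

theorem norm_sub_le_sSup_mul {φ ψ : ∀ i, V i → W i}
    (hφ : ∀ i ζ, ‖(φ i ζ : X)‖ ≤ ‖(ζ : X)‖) (hψ : ∀ i ζ, ‖(ψ i ζ : X)‖ ≤ ‖(ζ : X)‖)
    (i : ι) (ζ : V i) :
    ‖(φ i ζ : X) - ψ i ζ‖ ≤
      sSup {r : ℝ | ∃ (k : ι) (ζ : V k), ζ ≠ 0 ∧ r = ‖(φ k ζ : X) - ψ k ζ‖ / ‖(ζ : X)‖} *
        ‖(ζ : X)‖ := by
  by_cases hζ : ζ = 0
  · subst hζ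
    have hφ0 : (φ i 0 : X) = 0 := norm_le_zero_iff.1 (by simpa using hφ i 0)
    have hψ0 : (ψ i 0 : X) = 0 := norm_le_zero_iff.1 (by simpa using hψ i 0)
    simp [hφ0, hψ0]
  · have hbdd : BddAbove {r : ℝ | ∃ (k : ι) (ζ : V k), ζ ≠ 0 ∧
        r = ‖(φ k ζ : X) - ψ k ζ‖ / ‖(ζ : X)‖} := by
      refine ⟨2, ?_⟩
      rintro _ ⟨k, η, -, rfl⟩
      refine div_le_of_le_mul₀ (norm_nonneg _) zero_le_two ?_
      linarith [norm_sub_le (φ k η : X) (ψ k η), hφ k η, hψ k η]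
    rw [← div_le_iff₀ (norm_pos_iff.2 (by simpa using hζ))]
    exact le_csSup hbdd ⟨i, ζ, hζ, rfl⟩

end GraphDistance

section LyapunovPerron

variable {X : Type*} [NormedAddCommGroup X] [NormedSpace ℝ X] {A P : ℕ → X →L[ℝ] X}
  {a : ℕ → ℕ → ℝ}

def IsLyapunovPerronSolution (A P : ℕ → X →L[ℝ] X) (f : ℕ → X → X)
    (φ : ∀ n : ℕ, LinearMap.range (P n : X →ₗ[ℝ] X) → LinearMap.ker (P n : X →ₗ[ℝ] X))
    (n : ℕ) (x : ∀ m : ℕ, LinearMap.range (P n : X →ₗ[ℝ] X) → LinearMap.range (P m : X →ₗ[ℝ] X)) :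
    Prop :=
  ∀ m : ℕ, n ≤ m → ∀ ξ : LinearMap.range (P n : X →ₗ[ℝ] X),
    (x m ξ : X) = calA A m n (ξ : X) +
      ∑ k ∈ Ico n m, calA A m (k + 1) (P (k + 1) (f k ((x k ξ : X) + (φ k (x k ξ) : X))))

theorem norm_calA_le_of_mem_range {m n : ℕ} (hproj : (P n).comp (P n) = P n)
    (hD1 : ‖(calA A m n).comp (P n)‖ ≤ a m n) (ξ : LinearMap.range (P n : X →ₗ[ℝ] X)) :
    ‖calA A m n (ξ : X)‖ ≤ a m n * ‖(ξ : X)‖ := by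
  have hidem : IsIdempotentElem (P n) := hproj
  have hξ : P n ξ = ξ :=
    (LinearMap.IsIdempotentElem.mem_range_iff
      (ContinuousLinearMap.IsIdempotentElem.toLinearMap hidem)).1 ξ.2
  simpa only [ContinuousLinearMap.comp_apply, hξ] using
    ((calA A m n).comp (P n)).le_of_opNorm_le hD1 ξ

theorem norm_sum_calA_le (hD1 : ∀ m n : ℕ, n ≤ m → ‖(calA A m n).comp (P n)‖ ≤ a m n)
    (n m : ℕ) (w : ℕ → X) :
    ‖∑ k ∈ Ico n m, calA A m (k + 1) (P (k + 1) (w k))‖ ≤ ∑ k ∈ Ico n m, a m (k + 1) * ‖w k‖ :=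
  (norm_sum_le _ _).trans <| sum_le_sum fun k hk =>
    ((calA A m (k + 1)).comp (P (k + 1))).le_of_opNorm_le (hD1 m (k + 1) (mem_Ico.1 hk).2) _

variable {f : ℕ → X → X} {L : ℕ → ℝ} {α : ℝ} {n : ℕ}
  {φ ψ : ∀ n : ℕ, LinearMap.range (P n : X →ₗ[ℝ] X) → LinearMap.ker (P n : X →ₗ[ℝ] X)}
  {x y : ∀ m : ℕ, LinearMap.range (P n : X →ₗ[ℝ] X) → LinearMap.range (P m : X →ₗ[ℝ] X)}

theorem IsLyapunovPerronSolution.norm_le (hy : IsLyapunovPerronSolution A P f ψ n y)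
    (ha : ∀ m k, k ≤ m → 0 ≤ a m k) (hproj : (P n).comp (P n) = P n)
    (hD1 : ∀ m n : ℕ, n ≤ m → ‖(calA A m n).comp (P n)‖ ≤ a m n)
    (hL0 : ∀ k, 0 ≤ L k) (hf : ∀ k w, ‖f k w‖ ≤ L k * ‖w‖)
    (hψ : ∀ k ζ, ‖(ψ k ζ : X)‖ ≤ ‖(ζ : X)‖)
    (hα : ∀ m, n ≤ m → ∑ k ∈ Ico n m, a m (k + 1) * (a k n * L k) ≤ α * a m n)
    (h2α : 2 * α < 1) (ξ : LinearMap.range (P n : X →ₗ[ℝ] X)) :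
    ∀ m, n ≤ m → ‖(y m ξ : X)‖ ≤ ‖(ξ : X)‖ / (1 - 2 * α) * a m n := by
  have hgraph : ∀ k, ‖f k ((y k ξ : X) + ψ k (y k ξ))‖ ≤ L k * (2 * ‖(y k ξ : X)‖) := fun k =>
    (hf k _).trans <| mul_le_mul_of_nonneg_left
      (by linarith [norm_add_le (y k ξ : X) (ψ k (y k ξ)), hψ k (y k ξ)]) (hL0 k)
  simpa using le_mul_of_le_add_sum_mul (u := fun m => ‖(y m ξ : X)‖) (e := 0) ha hL0 zero_le_two
    h2α (by positivity) hα fun m hnm => by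
      rw [hy m hnm ξ]
      calc _ ≤ ‖calA A m n (ξ : X)‖ + ‖∑ k ∈ Ico n m,
              calA A m (k + 1) (P (k + 1) (f k ((y k ξ : X) + ψ k (y k ξ))))‖ := norm_add_le _ _
        _ ≤ ‖(ξ : X)‖ * a m n + ∑ k ∈ Ico n m, a m (k + 1) * (L k * (2 * ‖(y k ξ : X)‖)) := by
          rw [mul_comm]
          gcongr ?_ + ?_
          · exact norm_calA_le_of_mem_range hproj (hD1 m n hnm) ξ
          · refine (norm_sum_calA_le hD1 n m _).trans (sum_le_sum fun k hk => ?_)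
            gcongr
            · exact ha m (k + 1) (mem_Ico.1 hk).2
            · exact hgraph k
        _ = _ := by simp

theorem IsLyapunovPerronSolution.norm_sub_le (hx : IsLyapunovPerronSolution A P f φ n x)
    (hy : IsLyapunovPerronSolution A P f ψ n y) (ha : ∀ m k, k ≤ m → 0 ≤ a m k)
    (hD1 : ∀ m n : ℕ, n ≤ m → ‖(calA A m n).comp (P n)‖ ≤ a m n)
    (hL0 : ∀ k, 0 ≤ L k) (hLip : ∀ (k : ℕ) (u v : X), ‖f k u - f k v‖ ≤ L k * ‖u - v‖)
    (hφ : ∀ k (ζ ζ' : LinearMap.range (P k : X →ₗ[ℝ] X)),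
      ‖(φ k ζ : X) - φ k ζ'‖ ≤ ‖(ζ : X) - ζ'‖)
    {d : ℝ} (hd0 : 0 ≤ d) (hd : ∀ k ζ, ‖(φ k ζ : X) - ψ k ζ‖ ≤ d * ‖(ζ : X)‖)
    (hα : ∀ m, n ≤ m → ∑ k ∈ Ico n m, a m (k + 1) * (a k n * L k) ≤ α * a m n)
    (h2α : 2 * α < 1) (ξ : LinearMap.range (P n : X →ₗ[ℝ] X)) {K : ℝ} (hK : 0 ≤ K)
    (hyK : ∀ m, n ≤ m → ‖(y m ξ : X)‖ ≤ K * a m n) :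
    ∀ m, n ≤ m → ‖(x m ξ : X) - y m ξ‖ ≤ α * (d * K) / (1 - 2 * α) * a m n := by
  have hgraph : ∀ k, n ≤ k → ‖((x k ξ : X) + φ k (x k ξ)) - ((y k ξ : X) + ψ k (y k ξ))‖ ≤
      2 * ‖(x k ξ : X) - y k ξ‖ + d * K * a k n := fun k hnk =>
    calc _ = ‖((x k ξ : X) - y k ξ) + ((φ k (x k ξ) : X) - φ k (y k ξ)) +
              ((φ k (y k ξ) : X) - ψ k (y k ξ))‖ := by congr 1; abel
      _ ≤ ‖(x k ξ : X) - y k ξ‖ + ‖(x k ξ : X) - y k ξ‖ + d * (K * a k n) := by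
          grw [norm_add₃_le, hφ k, hd k, hyK k hnk]
      _ = _ := by ring
  simpa using le_mul_of_le_add_sum_mul (u := fun m => ‖(x m ξ : X) - y m ξ‖) (c := 0)
    ha hL0 zero_le_two h2α (by positivity) hα fun m hnm => by
      rw [hx m hnm ξ, hy m hnm ξ, add_sub_add_left_eq_sub, ← sum_sub_distrib]
      simp_rw [← map_sub]
      refine (norm_sum_calA_le hD1 n m _).trans ?_
      rw [zero_mul, zero_add]
      refine sum_le_sum fun k hk => ?_
      obtain ⟨hnk, hkm⟩ := mem_Ico.1 hk
      gcongr
      · exact ha m (k + 1) hkm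
      · exact (hLip k _ _).trans (mul_le_mul_of_nonneg_left (hgraph k hnk) (hL0 k))

end LyapunovPerron

theorem xphi_sub_xpsi_le_general
    {X : Type*} [NormedAddCommGroup X] [NormedSpace ℝ X]
    (A P : ℕ → X →L[ℝ] X) (a : ℕ → ℕ → ℝ)
    -- the bounds are positive
    (ha : ∀ m n : ℕ, n ≤ m → 0 < a m n)
    -- the `P n` are bounded projections
    (hproj : ∀ n, (P n).comp (P n) = P n)
    -- (D1) : `‖𝒜_{m,n} P n‖ ≤ a m n`
    (hD1 : ∀ m n : ℕ, n ≤ m → ‖(calA A m n).comp (P n)‖ ≤ a m n)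
    -- the perturbations `f k` vanish at `0` and are Lipschitz with constant `L k`
    (f : ℕ → X → X) (L : ℕ → ℝ) (hL0 : ∀ k, 0 ≤ L k) (hf0 : ∀ k, f k 0 = 0)
    (hLip : ∀ (k : ℕ) (u v : X), ‖f k u - f k v‖ ≤ L k * ‖u - v‖)
    -- `α = sup_{m>n} (1/a_{m,n}) ∑_{k=n}^{m-1} a_{m,k+1} a_{k,n} Lip(f k) < ∞`
    (α : ℝ)
    (hα : IsLUB {r : ℝ | ∃ m n : ℕ, n < m ∧
      r = (∑ k ∈ Finset.Ico n m, a m (k + 1) * (a k n * L k)) / a m n} α)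
    -- `β = sup_n ∑_{k=n}^{∞} b_{k+1,n} a_{k,n} Lip(f k) < ∞`
    (β : ℝ)
    -- `2α + max {2β, √β} < 1`
    (hcond : 2 * α + max (2 * β) (Real.sqrt β) < 1)
    (φ : ∀ n : ℕ, LinearMap.range (P n : X →ₗ[ℝ] X) → LinearMap.ker (P n : X →ₗ[ℝ] X))
    (hφ : ((∀ n, φ n 0 = 0) ∧
      ∀ (n : ℕ) (ξ ξ' : LinearMap.range (P n : X →ₗ[ℝ] X)),
        ‖(φ n ξ : X) - (φ n ξ' : X)‖ ≤ ‖(ξ : X) - (ξ' : X)‖))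
    (ψ : ∀ n : ℕ, LinearMap.range (P n : X →ₗ[ℝ] X) → LinearMap.ker (P n : X →ₗ[ℝ] X))
    (hψ : ((∀ n, ψ n 0 = 0) ∧
      ∀ (n : ℕ) (ξ ξ' : LinearMap.range (P n : X →ₗ[ℝ] X)),
        ‖(ψ n ξ : X) - (ψ n ξ' : X)‖ ≤ ‖(ξ : X) - (ξ' : X)‖))
    (n : ℕ) (x : ∀ m : ℕ, LinearMap.range (P n : X →ₗ[ℝ] X) → LinearMap.range (P m : X →ₗ[ℝ] X))
    (hx : ((∀ m : ℕ, n ≤ m → x m 0 = 0) ∧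
      (∃ C : ℝ, ∀ m : ℕ, n ≤ m → ∀ ξ : LinearMap.range (P n : X →ₗ[ℝ] X),
        ‖(x m ξ : X)‖ ≤ C * (a m n * ‖(ξ : X)‖)) ∧
      (∀ m : ℕ, n ≤ m → ∀ ξ : LinearMap.range (P n : X →ₗ[ℝ] X),
        (x m ξ : X) = calA A m n (ξ : X) +
          ∑ k ∈ Finset.Ico n m,
            calA A m (k + 1) (P (k + 1) (f k ((x k ξ : X) + (φ k (x k ξ) : X)))))))
    (y : ∀ m : ℕ, LinearMap.range (P n : X →ₗ[ℝ] X) → LinearMap.range (P m : X →ₗ[ℝ] X))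
    (hy : ((∀ m : ℕ, n ≤ m → y m 0 = 0) ∧
      (∃ C : ℝ, ∀ m : ℕ, n ≤ m → ∀ ξ : LinearMap.range (P n : X →ₗ[ℝ] X),
        ‖(y m ξ : X)‖ ≤ C * (a m n * ‖(ξ : X)‖)) ∧
      (∀ m : ℕ, n ≤ m → ∀ ξ : LinearMap.range (P n : X →ₗ[ℝ] X),
        (y m ξ : X) = calA A m n (ξ : X) +
          ∑ k ∈ Finset.Ico n m,
            calA A m (k + 1) (P (k + 1) (f k ((y k ξ : X) + (ψ k (y k ξ) : X))))))) :
    ∀ m : ℕ, n ≤ m → ∀ ξ : LinearMap.range (P n : X →ₗ[ℝ] X),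
      ‖(x m ξ : X) - (y m ξ : X)‖ ≤
        α / (1 - 2 * α) ^ 2 *
          sSup {r : ℝ | ∃ (k : ℕ) (ζ : LinearMap.range (P k : X →ₗ[ℝ] X)), ζ ≠ 0 ∧
            r = ‖(φ k ζ : X) - (ψ k ζ : X)‖ / ‖(ζ : X)‖} *
          (a m n * ‖(ξ : X)‖) := by
  intro m hnm ξ
  obtain ⟨hφ0, hφL⟩ := hφ
  obtain ⟨hψ0, hψL⟩ := hψ
  have ha' : ∀ m k, k ≤ m → 0 ≤ a m k := fun m k hkm => (ha m k hkm).le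
  have hf : ∀ k w, ‖f k w‖ ≤ L k * ‖w‖ := fun k w => by simpa [hf0 k] using hLip k w 0
  have hφ1 : ∀ k ζ, ‖(φ k ζ : X)‖ ≤ ‖(ζ : X)‖ := fun k ζ => by simpa [hφ0 k] using hφL k ζ 0
  have hψ1 : ∀ k ζ, ‖(ψ k ζ : X)‖ ≤ ‖(ζ : X)‖ := fun k ζ => by simpa [hψ0 k] using hψL k ζ 0
  have hαsum := sum_le_mul_of_mem_upperBounds ha hL0 hα.1 n
  have h2α : 2 * α < 1 := by linarith [le_max_right (2 * β) √β, Real.sqrt_nonneg β]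
  have hd0 : 0 ≤ sSup {r : ℝ | ∃ (k : ℕ) (ζ : LinearMap.range (P k : X →ₗ[ℝ] X)), ζ ≠ 0 ∧
      r = ‖(φ k ζ : X) - (ψ k ζ : X)‖ / ‖(ζ : X)‖} :=
    Real.sSup_nonneg (by rintro _ ⟨k, ζ, -, rfl⟩; positivity)
  have hxs : IsLyapunovPerronSolution A P f φ n x := hx.2.2
  have hys : IsLyapunovPerronSolution A P f ψ n y := hy.2.2
  have hyK := hys.norm_le ha' (hproj n) hD1 hL0 hf hψ1 hαsum h2α ξ
  have hxy := hxs.norm_sub_le hys ha' hD1 hL0 hLip hφL hd0 (norm_sub_le_sSup_mul hφ1 hψ1) hαsum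
    h2α ξ (div_nonneg (norm_nonneg _) (by linarith)) hyK m hnm
  exact hxy.trans_eq (by field_simp)

/-- Estimate `‖x^φ - x^ψ‖_n ≤ (α/(1-2α)²) d(φ,ψ)`. -/
theorem xphi_sub_xpsi_le
    {X : Type*} [NormedAddCommGroup X] [NormedSpace ℝ X] [CompleteSpace X]
    (A P : ℕ → X →L[ℝ] X) (B : ℕ → ℕ → X →L[ℝ] X) (a b : ℕ → ℕ → ℝ)
    -- the bounds are positive
    (ha : ∀ m n : ℕ, n ≤ m → 0 < a m n) (hb : ∀ m n : ℕ, n ≤ m → 0 < b m n)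
    -- the `P n` are bounded projections
    (hproj : ∀ n, (P n).comp (P n) = P n)
    -- (S1) : `P m ∘ 𝒜_{m,n} = 𝒜_{m,n} ∘ P n`
    (hS1 : ∀ m n : ℕ, n ≤ m → (P m).comp (calA A m n) = (calA A m n).comp (P n))
    -- (S2)/(S3) : `B m n` is the operator `(𝒜_{m,n}|_{F n})⁻¹ ∘ Q m`, where `Q m = Id - P m`;
    -- its existence encodes that `𝒜_{m,n}` maps `F n = ker (P n)` bijectively onto `F m`
    (hB1 : ∀ m n : ℕ, n ≤ m → ∀ x : X, calA A m n (B m n x) = x - P m x)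
    (hB2 : ∀ m n : ℕ, n ≤ m → ∀ x : X, B m n (calA A m n x) = x - P n x)
    (hBF : ∀ m n : ℕ, n ≤ m → ∀ x : X, P n (B m n x) = 0)
    -- (D1) : `‖𝒜_{m,n} P n‖ ≤ a m n`
    (hD1 : ∀ m n : ℕ, n ≤ m → ‖(calA A m n).comp (P n)‖ ≤ a m n)
    -- (D2) : `‖(𝒜_{m,n}|_{F n})⁻¹ Q m‖ ≤ b m n`
    (hD2 : ∀ m n : ℕ, n ≤ m → ‖B m n‖ ≤ b m n)
    -- the perturbations `f k` vanish at `0` and are Lipschitz with constant `L k`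
    (f : ℕ → X → X) (L : ℕ → ℝ) (hL0 : ∀ k, 0 ≤ L k) (hf0 : ∀ k, f k 0 = 0)
    (hLip : ∀ (k : ℕ) (u v : X), ‖f k u - f k v‖ ≤ L k * ‖u - v‖)
    -- `α = sup_{m>n} (1/a_{m,n}) ∑_{k=n}^{m-1} a_{m,k+1} a_{k,n} Lip(f k) < ∞`
    (α : ℝ)
    (hα : IsLUB {r : ℝ | ∃ m n : ℕ, n < m ∧
      r = (∑ k ∈ Finset.Ico n m, a m (k + 1) * (a k n * L k)) / a m n} α)
    -- `β = sup_n ∑_{k=n}^{∞} b_{k+1,n} a_{k,n} Lip(f k) < ∞`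
    (β : ℝ)
    (hsum : ∀ n : ℕ, Summable fun j : ℕ => b (n + j + 1) n * (a (n + j) n * L (n + j)))
    (hβ : IsLUB {r : ℝ | ∃ n : ℕ,
      r = ∑' j : ℕ, b (n + j + 1) n * (a (n + j) n * L (n + j))} β)
    -- `2α + max {2β, √β} < 1`
    (hcond : 2 * α + max (2 * β) (Real.sqrt β) < 1)
    (φ : ∀ n : ℕ, LinearMap.range (P n : X →ₗ[ℝ] X) → LinearMap.ker (P n : X →ₗ[ℝ] X))
    (hφ : ((∀ n, φ n 0 = 0) ∧
      ∀ (n : ℕ) (ξ ξ' : LinearMap.range (P n : X →ₗ[ℝ] X)),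
        ‖(φ n ξ : X) - (φ n ξ' : X)‖ ≤ ‖(ξ : X) - (ξ' : X)‖))
    (ψ : ∀ n : ℕ, LinearMap.range (P n : X →ₗ[ℝ] X) → LinearMap.ker (P n : X →ₗ[ℝ] X))
    (hψ : ((∀ n, ψ n 0 = 0) ∧
      ∀ (n : ℕ) (ξ ξ' : LinearMap.range (P n : X →ₗ[ℝ] X)),
        ‖(ψ n ξ : X) - (ψ n ξ' : X)‖ ≤ ‖(ξ : X) - (ξ' : X)‖))
    (n : ℕ) (x : ∀ m : ℕ, LinearMap.range (P n : X →ₗ[ℝ] X) → LinearMap.range (P m : X →ₗ[ℝ] X))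
    (hx : ((∀ m : ℕ, n ≤ m → x m 0 = 0) ∧
      (∃ C : ℝ, ∀ m : ℕ, n ≤ m → ∀ ξ : LinearMap.range (P n : X →ₗ[ℝ] X),
        ‖(x m ξ : X)‖ ≤ C * (a m n * ‖(ξ : X)‖)) ∧
      (∀ m : ℕ, n ≤ m → ∀ ξ : LinearMap.range (P n : X →ₗ[ℝ] X),
        (x m ξ : X) = calA A m n (ξ : X) +
          ∑ k ∈ Finset.Ico n m,
            calA A m (k + 1) (P (k + 1) (f k ((x k ξ : X) + (φ k (x k ξ) : X)))))))
    (y : ∀ m : ℕ, LinearMap.range (P n : X →ₗ[ℝ] X) → LinearMap.range (P m : X →ₗ[ℝ] X))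
    (hy : ((∀ m : ℕ, n ≤ m → y m 0 = 0) ∧
      (∃ C : ℝ, ∀ m : ℕ, n ≤ m → ∀ ξ : LinearMap.range (P n : X →ₗ[ℝ] X),
        ‖(y m ξ : X)‖ ≤ C * (a m n * ‖(ξ : X)‖)) ∧
      (∀ m : ℕ, n ≤ m → ∀ ξ : LinearMap.range (P n : X →ₗ[ℝ] X),
        (y m ξ : X) = calA A m n (ξ : X) +
          ∑ k ∈ Finset.Ico n m,
            calA A m (k + 1) (P (k + 1) (f k ((y k ξ : X) + (ψ k (y k ξ) : X))))))) :
    ∀ m : ℕ, n ≤ m → ∀ ξ : LinearMap.range (P n : X →ₗ[ℝ] X),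
      ‖(x m ξ : X) - (y m ξ : X)‖ ≤
        α / (1 - 2 * α) ^ 2 *
          sSup {r : ℝ | ∃ (k : ℕ) (ζ : LinearMap.range (P k : X →ₗ[ℝ] X)), ζ ≠ 0 ∧
            r = ‖(φ k ζ : X) - (ψ k ζ : X)‖ / ‖(ζ : X)‖} *
          (a m n * ‖(ξ : X)‖) :=
  xphi_sub_xpsi_le_general A P a ha hproj hD1 f L hL0 hf0 hLip α hα β hcond φ hφ ψ hψ n x hx y hy
end

section
/- Suppose x_{m+1} = A_m x_m admits a general dichotomy with bounds (a_{m,n}) and (b_{m,n}), the f_m are Lipschitz with f_m(0)=0, and α < +∞. Fix φ ∈ 𝒳 and n ∈ ℕ, and define the operator J on ℬ_n by (Jx)_n(ξ) = ξ and (Jx)_m(ξ) = 𝒜_{m,n}ξ + Σ_{k=n}^{m−1} 𝒜_{m,k+1} P_{k+1} f_k(x_k(ξ) + φ_k(x_k(ξ))) for m > n. Then for every x ∈ ℬ_n one has Jx ∈ ℬ_n with (Jx)_m(0) = 0 for all m ≥ n and ‖Jx‖_n ≤ 1 + 2α ‖x‖_n. -/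
/-!
For `n ≤ m`, `(Jx)_m ξ = 𝒜_{m,n} ξ + ∑_{k=n}^{m-1} 𝒜_{m,k+1} P_{k+1} f_k (x_k ξ + φ_k (x_k ξ))`
(for `m = n` the sum is empty and `𝒜_{n,n} = Id`). Since `ξ ∈ E_n`, (D1) bounds the first term by
`a_{m,n} ‖ξ‖`. Since `φ_k` is `1`-Lipschitz and `f_k` is `L_k`-Lipschitz, both vanishing at `0`,
and `‖x‖_n ≤ N`, the `k`-th summand is at most
`a_{m,k+1} · 2 L_k ‖x_k ξ‖ ≤ 2 N a_{m,k+1} a_{k,n} L_k ‖ξ‖`; by the definition of `α` these sum to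
at most `2 α N a_{m,n} ‖ξ‖`. The bound at `ξ = 0` forces `(Jx)_m 0 = 0`.
-/

open Finset

theorem norm_map_add_le_of_lipschitz {E F : Type*} [SeminormedAddCommGroup E]
    [SeminormedAddCommGroup F] {g : E → F} {K : ℝ} (hK : 0 ≤ K) (hg0 : g 0 = 0)
    (hg : ∀ u v, ‖g u - g v‖ ≤ K * ‖u - v‖) {u w : E} (hw : ‖w‖ ≤ ‖u‖) :
    ‖g (u + w)‖ ≤ 2 * K * ‖u‖ :=
  calc ‖g (u + w)‖ ≤ K * ‖u + w‖ := by simpa [hg0] using hg (u + w) 0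
    _ ≤ K * (2 * ‖u‖) := by gcongr; linarith [norm_add_le u w]
    _ = 2 * K * ‖u‖ := by ring

theorem ContinuousLinearMap.apply_coe_range_of_comp_self {R M : Type*} [Ring R] [AddCommGroup M]
    [Module R M] [TopologicalSpace M] {P : M →L[R] M} (hP : P.comp P = P)
    (ξ : LinearMap.range (P : M →ₗ[R] M)) : P ξ = ξ :=
  (LinearMap.IsIdempotentElem.mem_range_iff
    (congrArg ContinuousLinearMap.toLinearMap hP)).1 ξ.2

def perturbationRatios (a : ℕ → ℕ → ℝ) (L : ℕ → ℝ) : Set ℝ :=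
  {r | ∃ m n : ℕ, n < m ∧ r = (∑ k ∈ Ico n m, a m (k + 1) * (a k n * L k)) / a m n}

section

variable {a : ℕ → ℕ → ℝ} {L : ℕ → ℝ} {α : ℝ}

theorem IsLUB.nonneg_of_perturbationRatios (hα : IsLUB (perturbationRatios a L) α)
    (ha : ∀ m n : ℕ, n ≤ m → 0 < a m n) (hL : ∀ k, 0 ≤ L k) : 0 ≤ α := by
  have hmem : a 1 1 * (a 0 0 * L 0) / a 1 0 ∈ perturbationRatios a L := ⟨1, 0, one_pos, by simp⟩
  have := ha 1 1 le_rfl; have := ha 0 0 le_rfl; have := ha 1 0 zero_le_one; have := hL 0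
  exact (hα.1 hmem).trans' (by positivity)

theorem IsLUB.sum_le_of_perturbationRatios (hα : IsLUB (perturbationRatios a L) α)
    (ha : ∀ m n : ℕ, n ≤ m → 0 < a m n) (hL : ∀ k, 0 ≤ L k) {m n : ℕ} (hnm : n ≤ m) :
    ∑ k ∈ Ico n m, a m (k + 1) * (a k n * L k) ≤ α * a m n := by
  rcases hnm.eq_or_lt with rfl | hlt
  · simpa using mul_nonneg (hα.nonneg_of_perturbationRatios ha hL) (ha n n le_rfl).le
  · exact (div_le_iff₀ (ha m n hnm)).1 (hα.1 ⟨m, n, hlt, rfl⟩)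

end

section

variable {X : Type*} [NormedAddCommGroup X] [NormedSpace ℝ X] {A P : ℕ → X →L[ℝ] X}
  {a : ℕ → ℕ → ℝ} {L : ℕ → ℝ} {α : ℝ}

theorem calA_self (k : ℕ) : calA A k k = ContinuousLinearMap.id ℝ X := by
  cases k <;> simp [calA]

theorem norm_sum_calA_apply_le {n m : ℕ}
    (hD1 : ∀ k ∈ Ico n m, ‖(calA A m (k + 1)).comp (P (k + 1))‖ ≤ a m (k + 1))
    {y : ℕ → X} {w : ℕ → ℝ} (hy : ∀ k ∈ Ico n m, ‖y k‖ ≤ w k) :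
    ‖∑ k ∈ Ico n m, calA A m (k + 1) (P (k + 1) (y k))‖ ≤ ∑ k ∈ Ico n m, a m (k + 1) * w k :=
  (norm_sum_le _ _).trans <| sum_le_sum fun k hk =>
    ((calA A m (k + 1)).comp (P (k + 1))).le_of_opNorm_le (hD1 k hk) (y k) |>.trans <|
      mul_le_mul_of_nonneg_left (hy k hk) ((norm_nonneg _).trans (hD1 k hk))

theorem norm_calA_add_sum_calA_le (hproj : ∀ n, (P n).comp (P n) = P n)
    (hD1 : ∀ m n : ℕ, n ≤ m → ‖(calA A m n).comp (P n)‖ ≤ a m n)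
    (ha : ∀ m n : ℕ, n ≤ m → 0 < a m n) (hL : ∀ k, 0 ≤ L k)
    (hα : IsLUB (perturbationRatios a L) α) {m n : ℕ} (hnm : n ≤ m)
    (ξ : LinearMap.range (P n : X →ₗ[ℝ] X)) {y : ℕ → X} {c : ℝ} (hc : 0 ≤ c)
    (hy : ∀ k ∈ Ico n m, ‖y k‖ ≤ a k n * L k * c) :
    ‖calA A m n ξ + ∑ k ∈ Ico n m, calA A m (k + 1) (P (k + 1) (y k))‖ ≤
      a m n * ‖(ξ : X)‖ + α * a m n * c := by
  have hlin : ‖calA A m n ξ‖ ≤ a m n * ‖(ξ : X)‖ := by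
    simpa [(P n).apply_coe_range_of_comp_self (hproj n)] using
      ((calA A m n).comp (P n)).le_of_opNorm_le (hD1 m n hnm) ξ
  have hsum : ‖∑ k ∈ Ico n m, calA A m (k + 1) (P (k + 1) (y k))‖ ≤
      (∑ k ∈ Ico n m, a m (k + 1) * (a k n * L k)) * c := by
    simpa only [sum_mul, mul_assoc] using
      norm_sum_calA_apply_le (fun k hk => hD1 m (k + 1) (mem_Ico.1 hk).2) hy
  calc _ ≤ a m n * ‖(ξ : X)‖ + (∑ k ∈ Ico n m, a m (k + 1) * (a k n * L k)) * c :=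
        (norm_add_le _ _).trans (add_le_add hlin hsum)
    _ ≤ a m n * ‖(ξ : X)‖ + α * a m n * c := by
        gcongr
        exact hα.sum_le_of_perturbationRatios ha hL hnm

end

theorem J_maps_B_into_B_general
    {X : Type*} [NormedAddCommGroup X] [NormedSpace ℝ X]
    (A P : ℕ → X →L[ℝ] X) (a : ℕ → ℕ → ℝ)
    -- the bounds are positive
    (ha : ∀ m n : ℕ, n ≤ m → 0 < a m n)
    -- the `P n` are bounded projections
    (hproj : ∀ n, (P n).comp (P n) = P n)
    -- (D1) : `‖𝒜_{m,n} P n‖ ≤ a m n`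
    (hD1 : ∀ m n : ℕ, n ≤ m → ‖(calA A m n).comp (P n)‖ ≤ a m n)
    -- the perturbations `f k` vanish at `0` and are Lipschitz with constant `L k`
    (f : ℕ → X → X) (L : ℕ → ℝ) (hL0 : ∀ k, 0 ≤ L k) (hf0 : ∀ k, f k 0 = 0)
    (hLip : ∀ (k : ℕ) (u v : X), ‖f k u - f k v‖ ≤ L k * ‖u - v‖)
    -- `α = sup_{m>n} (1/a_{m,n}) ∑_{k=n}^{m-1} a_{m,k+1} a_{k,n} Lip(f k) < ∞`
    (α : ℝ)
    (hα : IsLUB {r : ℝ | ∃ m n : ℕ, n < m ∧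
      r = (∑ k ∈ Finset.Ico n m, a m (k + 1) * (a k n * L k)) / a m n} α)
    (φ : ∀ n : ℕ, LinearMap.range (P n : X →ₗ[ℝ] X) → LinearMap.ker (P n : X →ₗ[ℝ] X))
    (hφ : ((∀ n, φ n 0 = 0) ∧
      ∀ (n : ℕ) (ξ ξ' : LinearMap.range (P n : X →ₗ[ℝ] X)),
        ‖(φ n ξ : X) - (φ n ξ' : X)‖ ≤ ‖(ξ : X) - (ξ' : X)‖))
    (n : ℕ) (x : ∀ m : ℕ, LinearMap.range (P n : X →ₗ[ℝ] X) → LinearMap.range (P m : X →ₗ[ℝ] X))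
    -- `N` is an upper bound for `‖x‖_n`
    (N : ℝ)
    (hN : ∀ m : ℕ, n ≤ m → ∀ ξ : LinearMap.range (P n : X →ₗ[ℝ] X),
      ‖(x m ξ : X)‖ ≤ N * (a m n * ‖(ξ : X)‖))
    -- `Jx` is the image of `x` under the operator `J = J_φ`
    (Jx : ∀ m : ℕ, LinearMap.range (P n : X →ₗ[ℝ] X) → LinearMap.range (P m : X →ₗ[ℝ] X))
    (hJ0 : ∀ ξ : LinearMap.range (P n : X →ₗ[ℝ] X), Jx n ξ = ξ)
    (hJ : ∀ m : ℕ, n < m → ∀ ξ : LinearMap.range (P n : X →ₗ[ℝ] X),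
      (Jx m ξ : X) = calA A m n (ξ : X) +
        ∑ k ∈ Finset.Ico n m,
          calA A m (k + 1) (P (k + 1) (f k ((x k ξ : X) + (φ k (x k ξ) : X)))))
    :
    (∀ m : ℕ, n ≤ m → Jx m 0 = 0) ∧
    (∀ m : ℕ, n ≤ m → ∀ ξ : LinearMap.range (P n : X →ₗ[ℝ] X),
      ‖(Jx m ξ : X)‖ ≤ (1 + 2 * α * N) * (a m n * ‖(ξ : X)‖)) := by
  obtain ⟨hφ0, hφLip⟩ := hφ
  have hJ' : ∀ m, n ≤ m → ∀ ξ, (Jx m ξ : X) = calA A m n (ξ : X) + ∑ k ∈ Ico n m,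
      calA A m (k + 1) (P (k + 1) (f k ((x k ξ : X) + (φ k (x k ξ) : X)))) := by
    intro m hm ξ
    rcases hm.eq_or_lt with rfl | hlt
    · simp [hJ0, calA_self]
    · exact hJ m hlt ξ
  have hbound : ∀ m, n ≤ m → ∀ ξ : LinearMap.range (P n : X →ₗ[ℝ] X),
      ‖(Jx m ξ : X)‖ ≤ (1 + 2 * α * N) * (a m n * ‖(ξ : X)‖) := by
    intro m hm ξ
    have hNξ : 0 ≤ N * ‖(ξ : X)‖ := nonneg_of_mul_nonneg_right
      (by linarith [norm_nonneg (x n ξ : X), hN n le_rfl ξ]) (ha n n le_rfl)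
    have hf : ∀ k ∈ Ico n m, ‖f k ((x k ξ : X) + (φ k (x k ξ) : X))‖ ≤
        a k n * L k * (2 * N * ‖(ξ : X)‖) := fun k hk =>
      have hφξ : ‖(φ k (x k ξ) : X)‖ ≤ ‖(x k ξ : X)‖ := by simpa [hφ0] using hφLip k (x k ξ) 0
      (norm_map_add_le_of_lipschitz (hL0 k) (hf0 k) (hLip k) hφξ).trans
        (by nlinarith [hN k (mem_Ico.1 hk).1 ξ, hL0 k])
    calc ‖(Jx m ξ : X)‖ ≤ a m n * ‖(ξ : X)‖ + α * a m n * (2 * N * ‖(ξ : X)‖) :=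
          hJ' m hm ξ ▸ norm_calA_add_sum_calA_le hproj hD1 ha hL0 hα hm ξ (by linarith) hf
      _ = (1 + 2 * α * N) * (a m n * ‖(ξ : X)‖) := by ring
  refine ⟨fun m hm => ?_, hbound⟩
  simpa using hbound m hm 0

/-- The operator `J` maps `ℬ_n` into itself, with `‖J x‖_n ≤ 1 + 2 α ‖x‖_n`. -/
theorem J_maps_B_into_B
    {X : Type*} [NormedAddCommGroup X] [NormedSpace ℝ X] [CompleteSpace X]
    (A P : ℕ → X →L[ℝ] X) (B : ℕ → ℕ → X →L[ℝ] X) (a b : ℕ → ℕ → ℝ)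
    -- the bounds are positive
    (ha : ∀ m n : ℕ, n ≤ m → 0 < a m n) (hb : ∀ m n : ℕ, n ≤ m → 0 < b m n)
    -- the `P n` are bounded projections
    (hproj : ∀ n, (P n).comp (P n) = P n)
    -- (S1) : `P m ∘ 𝒜_{m,n} = 𝒜_{m,n} ∘ P n`
    (hS1 : ∀ m n : ℕ, n ≤ m → (P m).comp (calA A m n) = (calA A m n).comp (P n))
    -- (S2)/(S3) : `B m n` is the operator `(𝒜_{m,n}|_{F n})⁻¹ ∘ Q m`, where `Q m = Id - P m`;
    -- its existence encodes that `𝒜_{m,n}` maps `F n = ker (P n)` bijectively onto `F m`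
    (hB1 : ∀ m n : ℕ, n ≤ m → ∀ x : X, calA A m n (B m n x) = x - P m x)
    (hB2 : ∀ m n : ℕ, n ≤ m → ∀ x : X, B m n (calA A m n x) = x - P n x)
    (hBF : ∀ m n : ℕ, n ≤ m → ∀ x : X, P n (B m n x) = 0)
    -- (D1) : `‖𝒜_{m,n} P n‖ ≤ a m n`
    (hD1 : ∀ m n : ℕ, n ≤ m → ‖(calA A m n).comp (P n)‖ ≤ a m n)
    -- (D2) : `‖(𝒜_{m,n}|_{F n})⁻¹ Q m‖ ≤ b m n`
    (hD2 : ∀ m n : ℕ, n ≤ m → ‖B m n‖ ≤ b m n)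
    -- the perturbations `f k` vanish at `0` and are Lipschitz with constant `L k`
    (f : ℕ → X → X) (L : ℕ → ℝ) (hL0 : ∀ k, 0 ≤ L k) (hf0 : ∀ k, f k 0 = 0)
    (hLip : ∀ (k : ℕ) (u v : X), ‖f k u - f k v‖ ≤ L k * ‖u - v‖)
    -- `α = sup_{m>n} (1/a_{m,n}) ∑_{k=n}^{m-1} a_{m,k+1} a_{k,n} Lip(f k) < ∞`
    (α : ℝ)
    (hα : IsLUB {r : ℝ | ∃ m n : ℕ, n < m ∧
      r = (∑ k ∈ Finset.Ico n m, a m (k + 1) * (a k n * L k)) / a m n} α)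
    (φ : ∀ n : ℕ, LinearMap.range (P n : X →ₗ[ℝ] X) → LinearMap.ker (P n : X →ₗ[ℝ] X))
    (hφ : ((∀ n, φ n 0 = 0) ∧
      ∀ (n : ℕ) (ξ ξ' : LinearMap.range (P n : X →ₗ[ℝ] X)),
        ‖(φ n ξ : X) - (φ n ξ' : X)‖ ≤ ‖(ξ : X) - (ξ' : X)‖))
    (n : ℕ) (x : ∀ m : ℕ, LinearMap.range (P n : X →ₗ[ℝ] X) → LinearMap.range (P m : X →ₗ[ℝ] X))
    -- `x ∈ ℬ_n`
    (hx0 : ∀ m : ℕ, n ≤ m → x m 0 = 0)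
    (hxC : ∃ C : ℝ, ∀ m : ℕ, n ≤ m → ∀ ξ : LinearMap.range (P n : X →ₗ[ℝ] X),
      ‖(x m ξ : X)‖ ≤ C * (a m n * ‖(ξ : X)‖))
    -- `N` is an upper bound for `‖x‖_n`
    (N : ℝ)
    (hN : ∀ m : ℕ, n ≤ m → ∀ ξ : LinearMap.range (P n : X →ₗ[ℝ] X),
      ‖(x m ξ : X)‖ ≤ N * (a m n * ‖(ξ : X)‖))
    -- `Jx` is the image of `x` under the operator `J = J_φ`
    (Jx : ∀ m : ℕ, LinearMap.range (P n : X →ₗ[ℝ] X) → LinearMap.range (P m : X →ₗ[ℝ] X))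
    (hJ0 : ∀ ξ : LinearMap.range (P n : X →ₗ[ℝ] X), Jx n ξ = ξ)
    (hJ : ∀ m : ℕ, n < m → ∀ ξ : LinearMap.range (P n : X →ₗ[ℝ] X),
      (Jx m ξ : X) = calA A m n (ξ : X) +
        ∑ k ∈ Finset.Ico n m,
          calA A m (k + 1) (P (k + 1) (f k ((x k ξ : X) + (φ k (x k ξ) : X)))))
    :
    (∀ m : ℕ, n ≤ m → Jx m 0 = 0) ∧
    (∀ m : ℕ, n ≤ m → ∀ ξ : LinearMap.range (P n : X →ₗ[ℝ] X),
      ‖(Jx m ξ : X)‖ ≤ (1 + 2 * α * N) * (a m n * ‖(ξ : X)‖)) :=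
  J_maps_B_into_B_general A P a ha hproj hD1 f L hL0 hf0 hLip α hα φ hφ n x N hN Jx hJ0 hJ
end
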